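/- Superlinearity of the infimal coercivity function: the function Υ : [0,∞) → ℝ defined by Υ(u) := inf_{λ ∈ [0,1)} [ ((1 − λ)/2)·u² + H_λ(u + 1/2) + H_λ(1/2 − u) ] satisfies Υ(u) ≥ 0 for all u ≥ 0 and Υ(u)/u → +∞ as u → +∞. -/

import Mathlib

/-!
Every `H_λ` is nonnegative: on the middle branch it is the Bregman divergence
`c log (c / y) - c + y` of `x log x` at `y = (1 + λ)/2`, and on the first branch it decreases to
the value `H_λ((1 - λ)/2) ≥ 0`. Hence `Υ ≥ 0`. For `u ≥ 1` only the linear branch of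
`H_λ(1/2 - u)` survives; writing `t = 1 - λ` and using `log ((1 - λ)/(1 + λ)) ≤ log t ≤ 0`, the
quantity inside the infimum is at least `u/2 · (u t - log t) ≥ u/2 · (1 + log u)`, so
`Υ(u)/u ≥ (1 + log u)/2 → ∞`.
-/

/-- The regularized entropy `H_λ` (for `λ ∈ [0,1)`). -/
noncomputable def Hlam (lam c : ℝ) : ℝ :=
  if c ≤ (1 - lam) / 2 then c * Real.log ((1 - lam) / (1 + lam)) + lam
  else if c ≤ (1 + lam) / 2 then c * Real.log (2 * c / (1 + lam)) - c + (1 + lam) / 2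
  else 0

/-- The infimal coercivity function
`Υ(u) = inf_{λ ∈ [0,1)} [ ((1-λ)/2) u² + H_λ(u + 1/2) + H_λ(1/2 - u) ]`. -/
noncomputable def Ups (u : ℝ) : ℝ :=
  ⨅ lam : Set.Ico (0:ℝ) 1,
    ((1 - (lam : ℝ)) / 2 * u ^ 2 + Hlam lam (u + 1/2) + Hlam lam (1/2 - u))

open Real Filter

lemma Hlam_of_le {lam c : ℝ} (hc : c ≤ (1 - lam) / 2) :
    Hlam lam c = c * log ((1 - lam) / (1 + lam)) + lam := by
  simp [Hlam, hc]

lemma Hlam_of_lt_of_le {lam c : ℝ} (hc₁ : (1 - lam) / 2 < c) (hc₂ : c ≤ (1 + lam) / 2) :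
    Hlam lam c = c * log (2 * c / (1 + lam)) - c + (1 + lam) / 2 := by
  simp [Hlam, hc₂, not_le.2 hc₁]

lemma Hlam_of_lt {lam c : ℝ} (hlam : 0 ≤ lam) (hc : (1 + lam) / 2 < c) : Hlam lam c = 0 := by
  simp [Hlam, not_le.2 hc, not_le.2 (show (1 - lam) / 2 < c by linarith)]

lemma mul_log_div_sub_add_nonneg {c y : ℝ} (hc : 0 < c) (hy : 0 < y) :
    0 ≤ c * log (c / y) - c + y := by
  have h := one_sub_inv_le_log_of_pos (div_pos hc hy)
  rw [inv_div] at h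
  have : c * (1 - y / c) = c - y := by field_simp
  linarith [mul_le_mul_of_nonneg_left h hc.le]

lemma Hlam_nonneg {lam : ℝ} (hlam₀ : 0 ≤ lam) (hlam₁ : lam < 1) (c : ℝ) : 0 ≤ Hlam lam c := by
  have hy : 0 < (1 + lam) / 2 := by linarith
  have divergence_nonneg : ∀ c, 0 < c →
      0 ≤ c * log (2 * c / (1 + lam)) - c + (1 + lam) / 2 := fun c hc => by
    simpa [div_div_eq_mul_div, mul_comm] using mul_log_div_sub_add_nonneg hc hy
  rcases le_or_gt c ((1 - lam) / 2) with hc | hc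
  · have hL : log ((1 - lam) / (1 + lam)) ≤ 0 :=
      log_nonpos (div_nonneg (by linarith) (by linarith))
        ((div_le_one (by linarith)).2 (by linarith))
    have hedge := divergence_nonneg ((1 - lam) / 2) (by linarith)
    rw [show 2 * ((1 - lam) / 2) = 1 - lam by ring] at hedge
    rw [Hlam_of_le hc]
    linarith [mul_le_mul_of_nonpos_right hc hL]
  rcases le_or_gt c ((1 + lam) / 2) with hc' | hc'
  · rw [Hlam_of_lt_of_le hc hc']
    exact divergence_nonneg c (by linarith)
  · rw [Hlam_of_lt hlam₀ hc']

lemma Ups_nonneg (u : ℝ) : 0 ≤ Ups u :=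
  Real.iInf_nonneg fun ⟨lam, hlam₀, hlam₁⟩ => by
    have : 0 ≤ (1 - lam) / 2 * u ^ 2 := mul_nonneg (by linarith) (sq_nonneg u)
    linarith [Hlam_nonneg hlam₀ hlam₁ (u + 1 / 2), Hlam_nonneg hlam₀ hlam₁ (1 / 2 - u)]

lemma one_add_log_le_mul_sub_log {a t : ℝ} (ha : 0 < a) (ht : 0 < t) :
    1 + log a ≤ a * t - log t := by
  have := log_le_sub_one_of_pos (mul_pos ha ht)
  rw [log_mul ha.ne' ht.ne'] at this
  linarith

lemma mul_one_add_log_le_Ups {u : ℝ} (hu : 1 ≤ u) : u / 2 * (1 + log u) ≤ Ups u := by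
  have : Nonempty (Set.Ico (0 : ℝ) 1) := ⟨⟨0, by norm_num⟩⟩
  refine le_ciInf fun ⟨lam, hlam₀, hlam₁⟩ => ?_
  have ht : 0 < 1 - lam := by linarith
  have hL : log ((1 - lam) / (1 + lam)) ≤ log (1 - lam) :=
    log_le_log (div_pos ht (by linarith)) (div_le_self ht.le (by linarith))
  have hlog_t : log (1 - lam) ≤ 0 := log_nonpos ht.le (by linarith)
  have hmin := mul_le_mul_of_nonneg_left (one_add_log_le_mul_sub_log (a := u) (by linarith) ht)
    (show 0 ≤ u / 2 by linarith)
  simp only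
  rw [Hlam_of_lt hlam₀ (by linarith), Hlam_of_le (by linarith)]
  linarith [mul_le_mul_of_nonpos_left hL (show 1 / 2 - u ≤ 0 by linarith),
    mul_nonneg_of_nonpos_of_nonpos (show 1 / 2 - u / 2 ≤ 0 by linarith) hlog_t]

/-- Superlinearity of the infimal coercivity function: `Υ ≥ 0` on `[0,∞)` and
`Υ(u)/u → +∞` as `u → +∞`. -/
theorem Ups_nonneg_superlinear :
    (∀ u : ℝ, 0 ≤ u → 0 ≤ Ups u) ∧
      Filter.Tendsto (fun u => Ups u / u) Filter.atTop Filter.atTop := by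
  refine ⟨fun u _ => Ups_nonneg u, ?_⟩
  have hlower : ∀ᶠ u in atTop, (1 + log u) / 2 ≤ Ups u / u :=
    eventually_atTop.2 ⟨1, fun u hu => by
      rw [le_div_iff₀ (by linarith)]
      linarith [mul_one_add_log_le_Ups hu]⟩
  exact tendsto_atTop_mono' _ hlower
    ((tendsto_atTop_add_const_left _ 1 tendsto_log_atTop).atTop_div_const two_pos)
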